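/- Let g_i, g_j be lightlike with (g_i,g_j) ≠ 0, m ≠ 0, m ≠ m_{ij}, and suppose x_j = Γ(m)_{ji} x_i where Γ(m)_{ji} is the hyperbolic rotation with parameter as in the family of flat connections. If g^n_i, g^n_j are the rescalings of g_i, g_j satisfying (g^n_i, x_i) = (g^n_j, x_j) = -1, then x_i - x_j = (m/(m_{ij}(g^n_i, g^n_j)))(g^n_i - g^n_j); in particular x and g^n are edge-parallel. -/

import Mathlib

def mink (v w : Fin 4 → ℝ) : ℝ :=
  -(v 0 * w 0) + v 1 * w 1 + v 2 * w 2 + v 3 * w 3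

noncomputable def Gam (gi gj : Fin 4 → ℝ) (mij t : ℝ) (v : Fin 4 → ℝ) : Fin 4 → ℝ :=
  v + (t / (mij * mink gi gj)) •
    (((1 / (1 - t / mij)) * mink gi v) • gj - mink gj v • gi)

/-! Since `g_i` is lightlike, `Γ(m)_{ij}` multiplies `(g_i, ·)` by `1 / (1 - m/m_{ij})`, so the
normalizations `(gⁿ_i, x_i) = (gⁿ_j, x_j) = -1` force `c_i = -(1 - m/m_{ij}) / (g_i, x_j)` and
`c_j = -1 / (g_j, x_j)`. Both `x_i - x_j = Γ(m)_{ij} x_j - x_j` and `gⁿ_i - gⁿ_j` are combinations of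
`g_i` and `g_j`, and with these values their coefficients agree. -/

theorem mink_smul_left (c : ℝ) (v w : Fin 4 → ℝ) : mink (c • v) w = c * mink v w := by
  simp only [mink, Pi.smul_apply, smul_eq_mul]; ring

theorem mink_smul_right (c : ℝ) (v w : Fin 4 → ℝ) : mink v (c • w) = c * mink v w := by
  simp only [mink, Pi.smul_apply, smul_eq_mul]; ring

theorem mink_add_right (v w₁ w₂ : Fin 4 → ℝ) : mink v (w₁ + w₂) = mink v w₁ + mink v w₂ := by
  simp only [mink, Pi.add_apply]; ring

theorem mink_sub_right (v w₁ w₂ : Fin 4 → ℝ) : mink v (w₁ - w₂) = mink v w₁ - mink v w₂ := by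
  simp only [mink, Pi.sub_apply]; ring

section Gam

variable {gi gj : Fin 4 → ℝ} {mij t : ℝ}

theorem one_sub_div_ne_zero (hmij : mij ≠ 0) (ht : t ≠ mij) : 1 - t / mij ≠ 0 := by
  rw [sub_ne_zero, ne_comm, ne_eq, div_eq_one_iff_eq hmij]
  exact ht

theorem Gam_sub_self (v : Fin 4 → ℝ) :
    Gam gi gj mij t v - v =
      (t / (mij * mink gi gj)) • (((1 / (1 - t / mij)) * mink gi v) • gj - mink gj v • gi) :=
  add_sub_cancel_left _ _

theorem mink_Gam_left (hgi : mink gi gi = 0) (hG : mink gi gj ≠ 0) (hmij : mij ≠ 0)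
    (ht : t ≠ mij) (v : Fin 4 → ℝ) :
    mink gi (Gam gi gj mij t v) = mink gi v / (1 - t / mij) := by
  have hs := one_sub_div_ne_zero hmij ht
  rw [Gam, mink_add_right, mink_smul_right, mink_sub_right, mink_smul_right, mink_smul_right, hgi]
  field_simp
  ring

theorem Gam_sub_self_eq_smul_sub (hgi : mink gi gi = 0) (hG : mink gi gj ≠ 0) (hmij : mij ≠ 0)
    (ht : t ≠ mij) {v : Fin 4 → ℝ} {ci cj : ℝ}
    (hci : ci * mink gi (Gam gi gj mij t v) = -1) (hcj : cj * mink gj v = -1) :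
    Gam gi gj mij t v - v = (t / (mij * mink (ci • gi) (cj • gj))) • (ci • gi - cj • gj) := by
  have hs := one_sub_div_ne_zero hmij ht
  rw [mink_Gam_left hgi hG hmij ht] at hci
  have hA : mink gi v ≠ 0 := by rintro h; simp [h] at hci
  have hB : mink gj v ≠ 0 := by rintro h; simp [h] at hcj
  obtain rfl : ci = -(1 - t / mij) / mink gi v := by
    field_simp at hci ⊢; linarith
  obtain rfl : cj = -1 / mink gj v := by
    field_simp at hcj ⊢; linarith
  rw [Gam_sub_self, mink_smul_left, mink_smul_right]
  match_scalars <;> field_simp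

end Gam

theorem parallel_section_edge_parallel_general
    (gi gj xi xj gni gnj : Fin 4 → ℝ) (m mij ci cj : ℝ)
    (hgi : mink gi gi = 0) (hij : mink gi gj ≠ 0)
    (hmij : mij ≠ 0) (hmm : m ≠ mij)
    (hx : xi = Gam gi gj mij m xj)
    (hgni : gni = ci • gi) (hgnj : gnj = cj • gj)
    (hni : mink gni xi = -1) (hnj : mink gnj xj = -1) :
    xi - xj = (m / (mij * mink gni gnj)) • (gni - gnj) := by
  subst hx hgni hgnj
  rw [mink_smul_left] at hni hnj
  exact Gam_sub_self_eq_smul_sub hgi hij hmij hmm hni hnj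

/-- A parallel section `x` of `Γ(m)` is edge-parallel to the normalized lift `gⁿ`:
`x_i - x_j = (m/(m_{ij}(gⁿ_i,gⁿ_j))) (gⁿ_i - gⁿ_j)`. -/
theorem parallel_section_edge_parallel
    (gi gj xi xj gni gnj : Fin 4 → ℝ) (m mij ci cj : ℝ)
    (hgi : mink gi gi = 0) (hgj : mink gj gj = 0) (hij : mink gi gj ≠ 0)
    (hm : m ≠ 0) (hmij : mij ≠ 0) (hmm : m ≠ mij)
    (hx : xi = Gam gi gj mij m xj)
    (hgni : gni = ci • gi) (hgnj : gnj = cj • gj)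
    (hni : mink gni xi = -1) (hnj : mink gnj xj = -1) :
    xi - xj = (m / (mij * mink gni gnj)) • (gni - gnj) :=
  parallel_section_edge_parallel_general gi gj xi xj gni gnj m mij ci cj hgi hij hmij hmm hx hgni
    hgnj hni hnj
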